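/- arXiv:1810.07560 — 3 statements merged into one kernel-verified Lean document; each statement's English description precedes it below -/
import Mathlib

section
/- For every positive integer n, the smallest positive integer c such that c·P' is integer-valued for every integer-valued polynomial P of degree ≤ n equals lcm(1,2,...,n). -/
open Polynomial

/-- A polynomial `P ∈ ℚ[X]` is integer-valued if it takes integer values at all integers. -/
def IntValued (P : Polynomial ℚ) : Prop := ∀ m : ℤ, ∃ z : ℤ, P.eval (m : ℚ) = (z : ℚ)

/-!
Newton interpolation around an integer `m` writes `P(m + X) = ∑_{k ≤ n} Δᵏ P(m) · (X choose k)`,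
and the forward differences `Δᵏ P(m)` of an integer-valued `P` are integers. Since the
derivative of `X choose k` at `0` is `(-1)^(k-1) / k`, `P'(m)` is an integral combination of
`1/1, …, 1/n`, so `lcm(1, …, n) · P'` is integer-valued. Conversely, testing `c · P'` on
`P = X choose k` at `0` gives `c / k ∈ ℤ`, i.e. `k ∣ c`, for every `k ≤ n`.
-/

open Finset Nat

noncomputable def binomialPoly (k : ℕ) : ℚ[X] := C (k ! : ℚ)⁻¹ * descPochhammer ℚ k

lemma binomialPoly_eval (k : ℕ) (x : ℚ) : (binomialPoly k).eval x = Ring.choose x k := by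
  rw [Ring.choose_eq_smul, ← aeval_eq_smeval, aeval_def, ← eval_map, descPochhammer_map,
    binomialPoly, eval_mul, eval_C, smul_eq_mul]

lemma binomialPoly_eval_natCast (k t : ℕ) : (binomialPoly k).eval (t : ℚ) = t.choose k := by
  rw [binomialPoly_eval, Ring.choose_natCast]

lemma intValued_binomialPoly (k : ℕ) : IntValued (binomialPoly k) := fun m =>
  ⟨Ring.choose m k, by
    rw [binomialPoly_eval]
    exact (Ring.map_choose (Int.castRingHom ℚ) m k).symm⟩

lemma natDegree_binomialPoly_le (k : ℕ) : (binomialPoly k).natDegree ≤ k :=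
  (natDegree_C_mul_le _ _).trans (descPochhammer_natDegree ℚ k).le

lemma derivative_descPochhammer_succ_eval_zero {R : Type*} [CommRing R] (j : ℕ) :
    (derivative (descPochhammer R (j + 1))).eval 0 = (-1) ^ j * j ! := by
  induction j with
  | zero => simp [descPochhammer_one]
  | succ j ih =>
    rw [descPochhammer_succ_right, derivative_mul, eval_add, eval_mul, eval_mul, ih,
      descPochhammer_ne_zero_eval_zero R j.succ_ne_zero]
    simp [factorial_succ]
    ring

lemma derivative_binomialPoly_succ_eval_zero (j : ℕ) :
    (derivative (binomialPoly (j + 1))).eval 0 = (-1) ^ j / (j + 1) := by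
  rw [binomialPoly, derivative_C_mul, eval_mul, eval_C, derivative_descPochhammer_succ_eval_zero,
    factorial_succ, cast_mul, cast_succ]
  field_simp

lemma IntValued.fwdDiff_iter_eval {P : ℚ[X]} (hP : IntValued P) (k : ℕ) (m : ℤ) :
    ∃ z : ℤ, (fwdDiff 1)^[k] P.eval (m : ℚ) = z := by
  choose v hv using hP
  refine ⟨∑ i ∈ range (k + 1), (-1) ^ (k - i) * k.choose i * v (m + i), ?_⟩
  simp [fwdDiff_iter_eq_sum_shift, ← hv]

lemma comp_X_add_C_eq_sum_binomialPoly {n : ℕ} {P : ℚ[X]} (hP : P.natDegree ≤ n) (y : ℚ) :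
    P.comp (X + C y) = ∑ k ∈ range (n + 1), C ((fwdDiff 1)^[k] P.eval y) * binomialPoly k := by
  refine eq_of_infinite_eval_eq _ _ <| Set.infinite_of_injective_forall_mem
    Nat.cast_injective (fun t : ℕ => ?_)
  set N := n + t + 1
  have hlhs :
      P.eval (y + t • 1) = ∑ k ∈ range N, (t.choose k : ℚ) * (fwdDiff 1)^[k] P.eval y := by
    rw [shift_eq_sum_fwdDiff_iter 1 P.eval]
    refine sum_subset_zero_on_sdiff (range_subset_range.mpr (by omega)) (fun k hk => ?_)
      (fun _ _ => nsmul_eq_mul ..)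
    simp [choose_eq_zero_of_lt (by simpa using (mem_sdiff.mp hk).2 : t < k)]
  have hrhs : ∑ k ∈ range (n + 1), (fwdDiff 1)^[k] P.eval y * (t.choose k : ℚ) =
      ∑ k ∈ range N, (t.choose k : ℚ) * (fwdDiff 1)^[k] P.eval y := by
    refine sum_subset_zero_on_sdiff (range_subset_range.mpr (by omega)) (fun k hk => ?_)
      (fun _ _ => mul_comm ..)
    have hnk : n < k := by simpa using (mem_sdiff.mp hk).2
    simp [fwdDiff_iter_eq_zero_of_degree_lt (hP.trans_lt hnk)]
  simp [eval_finsetSum, binomialPoly_eval_natCast, hrhs, ← hlhs, add_comm]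

lemma derivative_eval_eq_sum_fwdDiff_iter {n : ℕ} {P : ℚ[X]} (hP : P.natDegree ≤ n) (y : ℚ) :
    (derivative P).eval y =
      ∑ k ∈ range (n + 1), (fwdDiff 1)^[k] P.eval y * (derivative (binomialPoly k)).eval 0 := by
  have h := congrArg (fun Q => (derivative Q).eval 0) (comp_X_add_C_eq_sum_binomialPoly hP y)
  simpa [derivative_comp, derivative_sum, eval_finsetSum] using h

lemma succ_dvd_iff_exists_mul_derivative_binomialPoly_eval_zero (c j : ℕ) :
    j + 1 ∣ c ↔ ∃ z : ℤ, (c : ℚ) * (derivative (binomialPoly (j + 1))).eval 0 = z := by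
  rw [derivative_binomialPoly_succ_eval_zero]
  constructor
  · rintro ⟨e, rfl⟩
    exact ⟨(-1) ^ j * e, by push_cast; field_simp⟩
  · rintro ⟨z, hz⟩
    have hc : (c : ℚ) = (j + 1) * ((-1) ^ j * z) := by
      rw [← hz]
      field_simp
      rw [← pow_mul, mul_comm j, pow_mul]
      norm_num
    exact Int.natCast_dvd_natCast.mp ⟨(-1) ^ j * z, by exact_mod_cast hc⟩

lemma exists_mul_derivative_binomialPoly_eval_zero_of_lcm_dvd {n c k : ℕ}
    (hc : (Icc 1 n).lcm id ∣ c) (hk : k ≤ n) :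
    ∃ b : ℤ, (c : ℚ) * (derivative (binomialPoly k)).eval 0 = b := by
  rcases k with _ | j
  · exact ⟨0, by simp [binomialPoly]⟩
  · refine (succ_dvd_iff_exists_mul_derivative_binomialPoly_eval_zero c j).mp ?_
    exact (dvd_lcm (f := id) (mem_Icc.mpr ⟨j.succ_pos, hk⟩)).trans hc

lemma forall_intValued_C_mul_derivative_iff_lcm_dvd (n c : ℕ) :
    (∀ P : ℚ[X], IntValued P → P.natDegree ≤ n → IntValued (C (c : ℚ) * derivative P)) ↔
      (Icc 1 n).lcm id ∣ c := by
  constructor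
  · intro hc
    refine Finset.lcm_dvd fun k hk => ?_
    obtain ⟨hk1, hkn⟩ := mem_Icc.mp hk
    obtain ⟨j, rfl⟩ := Nat.exists_eq_add_one_of_ne_zero (by omega : k ≠ 0)
    obtain ⟨z, hz⟩ :=
      hc _ (intValued_binomialPoly (j + 1)) ((natDegree_binomialPoly_le _).trans hkn) 0
    refine (succ_dvd_iff_exists_mul_derivative_binomialPoly_eval_zero c j).mpr ⟨z, ?_⟩
    simpa using hz
  · intro hc P hP hd m
    obtain ⟨z, hz⟩ : (C (c : ℚ) * derivative P).eval (m : ℚ) ∈ (Int.castRingHom ℚ).range := by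
      rw [eval_mul, eval_C, derivative_eval_eq_sum_fwdDiff_iter hd, mul_sum]
      refine Subring.sum_mem _ fun k hk => ?_
      obtain ⟨a, ha⟩ := hP.fwdDiff_iter_eval k m
      obtain ⟨b, hb⟩ := exists_mul_derivative_binomialPoly_eval_zero_of_lcm_dvd hc
        (Nat.lt_succ_iff.mp (mem_range.mp hk))
      exact ⟨a * b, by rw [mul_left_comm, hb, ha]; simp⟩
    exact ⟨z, hz.symm⟩

theorem isLeast_c_eq_lcm_general (n : ℕ) :
    IsLeast {c : ℕ | 0 < c ∧ ∀ P : Polynomial ℚ, IntValued P → P.natDegree ≤ n →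
      IntValued (C (c : ℚ) * derivative P)}
      ((Finset.Icc 1 n).lcm id) := by
  have hpos : 0 < (Icc 1 n).lcm id := Nat.pos_of_ne_zero (by simp [Finset.lcm_eq_zero_iff])
  refine ⟨⟨hpos, (forall_intValued_C_mul_derivative_iff_lcm_dvd n _).mpr dvd_rfl⟩, ?_⟩
  rintro c ⟨hc0, hc⟩
  exact Nat.le_of_dvd hc0 ((forall_intValued_C_mul_derivative_iff_lcm_dvd n c).mp hc)

theorem isLeast_c_eq_lcm (n : ℕ) (hn : 0 < n) :
    IsLeast {c : ℕ | 0 < c ∧ ∀ P : Polynomial ℚ, IntValued P → P.natDegree ≤ n →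
      IntValued (C (c : ℚ) * derivative P)}
      ((Finset.Icc 1 n).lcm id) :=
  isLeast_c_eq_lcm_general n
end

section
/- For all positive integers n ≥ k, F_{n,k} = (k/n) · ∑_{m=k-1}^{n-1} F_{m,k-1}. -/
/-!
Multiply `F n k` by `n = i₁ + ⋯ + i_k`. The term `i_j / (i₁⋯i_k)` is the weight `1/∏` of the
composition of `n - i_j` into `k - 1` parts obtained by deleting the `j`-th part, and deleting
the `j`-th part is a bijection onto the compositions of all `m < n` into `k - 1` parts. Each of the
`k` choices of `j` therefore contributes `∑_{m<n} F m (k-1)`, and only `m ≥ k - 1` contribute.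
-/

/-- `F n k = ∑ 1/(i₁⋯i_k)` over ordered `k`-tuples of positive integers with sum `n`. -/
def F (n k : ℕ) : ℚ :=
  ∑ f ∈ (Finset.Nat.antidiagonalTuple k n).filter (fun f => ∀ j, f j ≠ 0),
    ∏ j, (1 : ℚ) / (f j : ℚ)

open Finset

def posAntidiagonalTuple (k n : ℕ) : Finset (Fin k → ℕ) :=
  (Nat.antidiagonalTuple k n).filter (fun f => ∀ j, f j ≠ 0)

@[simp]
lemma mem_posAntidiagonalTuple {k n : ℕ} {f : Fin k → ℕ} :
    f ∈ posAntidiagonalTuple k n ↔ ∑ i, f i = n ∧ ∀ i, f i ≠ 0 := by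
  simp [posAntidiagonalTuple, Nat.mem_antidiagonalTuple]

lemma F_eq_sum_posAntidiagonalTuple (n k : ℕ) :
    F n k = ∑ f ∈ posAntidiagonalTuple k n, ∏ j, (1 : ℚ) / (f j : ℚ) := rfl

lemma posAntidiagonalTuple_eq_empty_of_lt {k n : ℕ} (h : n < k) :
    posAntidiagonalTuple k n = ∅ := by
  refine eq_empty_of_forall_notMem fun f hf => ?_
  obtain ⟨hsum, hpos⟩ := mem_posAntidiagonalTuple.1 hf
  have : k ≤ ∑ i, f i := by
    simpa using sum_le_sum fun i (_ : i ∈ univ) => Nat.one_le_iff_ne_zero.2 (hpos i)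
  omega

lemma F_eq_zero_of_lt {k n : ℕ} (h : n < k) : F n k = 0 := by
  rw [F_eq_sum_posAntidiagonalTuple, posAntidiagonalTuple_eq_empty_of_lt h, sum_empty]

lemma sum_posAntidiagonalTuple_succ {M : Type*} [AddCommMonoid M] (K n : ℕ) (j : Fin (K + 1))
    (h : (Fin (K + 1) → ℕ) → M) :
    ∑ f ∈ posAntidiagonalTuple (K + 1) n, h f =
      ∑ m ∈ range n, ∑ g ∈ posAntidiagonalTuple K m, h (Fin.insertNth j (n - m) g) := by
  have left_inv : ∀ f ∈ posAntidiagonalTuple (K + 1) n,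
      Fin.insertNth j (n - (n - f j)) (Fin.removeNth j f) = f := by
    intro f hf
    obtain ⟨hsum, -⟩ := mem_posAntidiagonalTuple.1 hf
    have : f j ≤ n := hsum ▸ single_le_sum (fun i _ => Nat.zero_le (f i)) (mem_univ j)
    rw [Nat.sub_sub_self this, Fin.insertNth_self_removeNth]
  rw [sum_sigma']
  refine sum_nbij' (fun f => ⟨n - f j, Fin.removeNth j f⟩)
    (fun p => Fin.insertNth j (n - p.1) p.2) ?_ ?_ ?_ ?_ ?_
  · intro f hf
    obtain ⟨hsum, hpos⟩ := mem_posAntidiagonalTuple.1 hf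
    rw [← Fin.insertNth_self_removeNth j f, Fin.sum_insertNth] at hsum
    have := hpos j
    simp only [mem_sigma, mem_range, mem_posAntidiagonalTuple]
    exact ⟨by omega, by omega, fun i => hpos _⟩
  · rintro ⟨m, g⟩ hp
    simp only [mem_sigma, mem_range, mem_posAntidiagonalTuple] at hp
    obtain ⟨hm, hsum, hpos⟩ := hp
    dsimp only
    refine mem_posAntidiagonalTuple.2 ⟨by rw [Fin.sum_insertNth, hsum]; omega, fun i => ?_⟩
    rcases Fin.eq_self_or_eq_succAbove j i with rfl | ⟨i, rfl⟩
    · rw [Fin.insertNth_apply_same]; omega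
    · rw [Fin.insertNth_apply_succAbove]; exact hpos i
  · exact left_inv
  · rintro ⟨m, g⟩ hp
    simp only [mem_sigma, mem_range] at hp
    simp [Nat.sub_sub_self hp.1.le]
  · intro f hf
    rw [left_inv f hf]

lemma sum_mul_prod_one_div_eq_sum_F (K n : ℕ) (j : Fin (K + 1)) :
    ∑ f ∈ posAntidiagonalTuple (K + 1) n, (f j : ℚ) * ∏ i, (1 : ℚ) / (f i : ℚ) =
      ∑ m ∈ range n, F m K := by
  rw [sum_posAntidiagonalTuple_succ K n j]
  refine sum_congr rfl fun m hm => ?_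
  have : ((n - m : ℕ) : ℚ) ≠ 0 := by
    rw [mem_range] at hm
    exact_mod_cast (Nat.sub_pos_of_lt hm).ne'
  rw [F_eq_sum_posAntidiagonalTuple]
  refine sum_congr rfl fun g _ => ?_
  rw [Fin.prod_univ_succAbove _ j]
  simp only [Fin.insertNth_apply_same, Fin.insertNth_apply_succAbove]
  field_simp

lemma natCast_mul_F_succ (K n : ℕ) :
    (n : ℚ) * F n (K + 1) = (K + 1) * ∑ m ∈ range n, F m K := by
  calc (n : ℚ) * F n (K + 1)
      = ∑ f ∈ posAntidiagonalTuple (K + 1) n, ∑ j, (f j : ℚ) * ∏ i, (1 : ℚ) / (f i : ℚ) := by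
        rw [F_eq_sum_posAntidiagonalTuple, mul_sum]
        refine sum_congr rfl fun f hf => ?_
        rw [← sum_mul, ← Nat.cast_sum, (mem_posAntidiagonalTuple.1 hf).1]
    _ = ∑ j : Fin (K + 1), ∑ m ∈ range n, F m K := by
        rw [sum_comm]
        exact sum_congr rfl fun j _ => sum_mul_prod_one_div_eq_sum_F K n j
    _ = (K + 1) * ∑ m ∈ range n, F m K := by simp

lemma sum_range_F_eq_sum_Icc {n : ℕ} (K : ℕ) (hn : n ≠ 0) :
    ∑ m ∈ range n, F m K = ∑ m ∈ Icc K (n - 1), F m K := by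
  refine (sum_subset (fun m hm => ?_) fun m hm hmK => F_eq_zero_of_lt ?_).symm
  · simp only [mem_Icc, mem_range] at hm ⊢
    omega
  · simp only [mem_Icc, mem_range] at hm hmK
    omega

theorem F_sum_recurrence_general (n k : ℕ) (hk : 0 < k) :
    F n k = ((k : ℚ) / (n : ℚ)) * ∑ m ∈ Finset.Icc (k - 1) (n - 1), F m (k - 1) := by
  obtain ⟨K, rfl⟩ : ∃ K, k = K + 1 := ⟨k - 1, by omega⟩
  rcases eq_or_ne n 0 with rfl | hn
  · -- `F 0 (K + 1) = 0`, and the right side is `0` because `(K + 1) / 0 = 0` in `ℚ`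
    simp [F_eq_zero_of_lt]
  rw [Nat.add_sub_cancel, ← sum_range_F_eq_sum_Icc K hn, div_mul_eq_mul_div,
    eq_div_iff (Nat.cast_ne_zero.2 hn), mul_comm, natCast_mul_F_succ]
  push_cast
  ring

theorem F_sum_recurrence (n k : ℕ) (hk : 0 < k) (hkn : k ≤ n) :
    F n k = ((k : ℚ) / (n : ℚ)) * ∑ m ∈ Finset.Icc (k - 1) (n - 1), F m (k - 1) :=
  F_sum_recurrence_general n k hk
end

section
/- For all natural numbers n ≥ k and every integer-valued polynomial P of degree ≤ n, the polynomial q_{n,k}·P^{(k)} is integer-valued, where q_{n,k} := lcm{ i_1⋯i_k : i_1,...,i_k ≥ 1, i_1 + ⋯ + i_k ≤ n }. -/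
/-!
On polynomials of degree at most `n` over a field of characteristic zero, the forward difference
`Δ P = P(X + 1) - P` and the derivative `D` satisfy Newton's formula
`D = log (1 + Δ) = ∑_{d=1}^{n} (-1)^(d-1) Δ^d / d`: read off the coefficient of `T` in the
Gregory–Newton expansion `P(y + T) = ∑_k Δ^k P(y) · binom(T, k)`.
Hence `D^(k+1) P = ∑_d (-1)^(d-1) / d · D^k (Δ^d P)`, where `Δ^d P` is again integer-valued and of
degree at most `n - d`. By induction on `k`, `q_{n-d,k} · D^k (Δ^d P)` is integer-valued, and
`d · q_{n-d,k}` divides `q_{n,k+1}` because prepending `d` to a tuple admissible for `q_{n-d,k}`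
gives one admissible for `q_{n,k+1}`.
-/

open Polynomial

/-- `q n k` is the lcm of all products `i₁⋯i_k` over `k`-tuples of positive integers
with `i₁ + ⋯ + i_k ≤ n` (with `q n 0 = 1`). -/
def q (n k : ℕ) : ℕ :=
  ((Finset.range (n + 1)).biUnion
      (fun m => (Finset.Nat.antidiagonalTuple k m).filter (fun f => ∀ j, f j ≠ 0))).lcm
    (fun f => ∏ j, f j)

open Finset Nat

namespace Polynomial

section CommRing

variable {R : Type*} [CommRing R]

noncomputable def forwardDiff (P : R[X]) : R[X] := taylor 1 P - P

theorem eval_forwardDiff (P : R[X]) (x : R) :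
    (forwardDiff P).eval x = P.eval (x + 1) - P.eval x := by
  rw [forwardDiff, eval_sub, taylor_eval]

theorem eval_forwardDiff_iter (P : R[X]) (k : ℕ) (x : R) :
    (forwardDiff^[k] P).eval x = (fwdDiff 1)^[k] P.eval x := by
  induction k generalizing x with
  | zero => rfl
  | succ k ih =>
    rw [Function.iterate_succ_apply', Function.iterate_succ_apply', eval_forwardDiff, ih, ih]
    rfl

theorem natDegree_forwardDiff_le (P : R[X]) : (forwardDiff P).natDegree ≤ P.natDegree - 1 := by
  refine natDegree_le_pred ((natDegree_sub_le _ _).trans ?_) ?_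
  · rw [natDegree_taylor, max_self]
  · rw [forwardDiff, coeff_sub, coeff_taylor_natDegree, leadingCoeff, sub_self]

theorem natDegree_forwardDiff_iter_le (P : R[X]) (k : ℕ) :
    (forwardDiff^[k] P).natDegree ≤ P.natDegree - k := by
  induction k with
  | zero => rfl
  | succ k ih =>
    rw [Function.iterate_succ_apply']
    exact (natDegree_forwardDiff_le _).trans (by omega)

theorem descPochhammer_eval_neg_one (k : ℕ) :
    (descPochhammer R k).eval (-1) = (-1) ^ k * k ! := by
  induction k with
  | zero => simp
  | succ k ih =>
    rw [descPochhammer_succ_eval, ih, factorial_succ]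
    push_cast
    ring

theorem coeff_one_descPochhammer_succ (k : ℕ) :
    (descPochhammer R (k + 1)).coeff 1 = (-1) ^ k * k ! := by
  rw [descPochhammer_succ_left, coeff_X_mul, coeff_zero_eq_eval_zero, eval_comp, eval_sub, eval_X,
    eval_one, zero_sub, descPochhammer_eval_neg_one]

end CommRing

variable {K : Type*} [Field K] [CharZero K]

theorem taylor_eq_sum_forwardDiff_iter {P : K[X]} {n : ℕ} (hP : P.natDegree ≤ n) (y : K) :
    taylor y P =
      ∑ k ∈ range (n + 1), C ((forwardDiff^[k] P).eval y / k !) * descPochhammer K k := by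
  refine eq_of_infinite_eval_eq _ _ (Set.infinite_of_injective_forall_mem
    (f := ((↑) : ℕ → K)) Nat.cast_injective fun t => ?_)
  have hterm : ∀ k, (forwardDiff^[k] P).eval y / k ! * (descPochhammer K k).eval (t : K) =
      t.choose k • (fwdDiff 1)^[k] P.eval y := by
    intro k
    rw [nsmul_eq_mul, cast_choose_eq_descPochhammer_div, eval_forwardDiff_iter]
    ring
  have hvanish : ∀ k, n < k → (fwdDiff 1)^[k] P.eval y = 0 := fun k hk => by
    rw [fwdDiff_iter_eq_zero_of_degree_lt (hP.trans_lt hk), Pi.zero_apply]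
  simp only [Set.mem_ofPred_eq, taylor_eval, eval_finsetSum, eval_mul, eval_C, hterm]
  rw [add_comm, ← nsmul_one t, shift_eq_sum_fwdDiff_iter 1 P.eval t y]
  calc ∑ k ∈ range (t + 1), t.choose k • (fwdDiff 1)^[k] P.eval y
      = ∑ k ∈ range (n + t + 1), t.choose k • (fwdDiff 1)^[k] P.eval y :=
        sum_subset (by gcongr; omega) fun k _ hk => by
          rw [choose_eq_zero_of_lt (by simp at hk; omega), zero_smul]
    _ = ∑ k ∈ range (n + 1), t.choose k • (fwdDiff 1)^[k] P.eval y :=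
        (sum_subset (by gcongr; omega) fun k _ hk => by
          rw [hvanish k (by simp at hk; omega), smul_zero]).symm

theorem derivative_eq_sum_forwardDiff_iter {P : K[X]} {n : ℕ} (hP : P.natDegree ≤ n) :
    derivative P = ∑ d ∈ range n, ((-1) ^ d / (d + 1) : K) • forwardDiff^[d + 1] P := by
  refine Polynomial.funext fun y => ?_
  rw [← taylor_coeff_one, taylor_eq_sum_forwardDiff_iter hP y, finsetSum_coeff, sum_range_succ',
    eval_finsetSum]
  simp only [coeff_C_mul, descPochhammer_zero, coeff_one, one_ne_zero, if_false, mul_zero,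
    add_zero, coeff_one_descPochhammer_succ, eval_smul, smul_eq_mul]
  refine sum_congr rfl fun d _ => ?_
  have : (d ! : K) ≠ 0 := by exact_mod_cast factorial_ne_zero d
  rw [factorial_succ]
  push_cast
  field_simp

end Polynomial

def intValuedSubmodule : Submodule ℤ ℚ[X] where
  carrier := {P | IntValued P}
  zero_mem' m := ⟨0, by simp⟩
  add_mem' {P Q} hP hQ m := by
    obtain ⟨a, ha⟩ := hP m
    obtain ⟨b, hb⟩ := hQ m
    exact ⟨a + b, by simp [ha, hb]⟩
  smul_mem' c P hP m := by
    obtain ⟨a, ha⟩ := hP m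
    exact ⟨c * a, by simp [ha]⟩

theorem IntValued.forwardDiff {P : ℚ[X]} (hP : IntValued P) :
    IntValued (Polynomial.forwardDiff P) := by
  intro m
  obtain ⟨a, ha⟩ := hP (m + 1)
  obtain ⟨b, hb⟩ := hP m
  exact ⟨a - b, by rw [eval_forwardDiff]; push_cast [← ha, ← hb]; rfl⟩

theorem IntValued.forwardDiff_iter {P : ℚ[X]} (hP : IntValued P) (k : ℕ) :
    IntValued (Polynomial.forwardDiff^[k] P) := by
  induction k with
  | zero => exact hP
  | succ k ih => rw [Function.iterate_succ_apply']; exact ih.forwardDiff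

theorem prod_dvd_q {n k : ℕ} {f : Fin k → ℕ} (hf : ∀ j, f j ≠ 0) (hsum : ∑ j, f j ≤ n) :
    ∏ j, f j ∣ q n k :=
  dvd_lcm <| mem_biUnion.2 ⟨∑ j, f j, mem_range.2 (by omega),
    mem_filter.2 ⟨Finset.Nat.mem_antidiagonalTuple.2 rfl, hf⟩⟩

theorem q_dvd_of_forall_prod_dvd {n k m : ℕ}
    (h : ∀ f : Fin k → ℕ, (∀ j, f j ≠ 0) → ∑ j, f j ≤ n → ∏ j, f j ∣ m) : q n k ∣ m :=
  Finset.lcm_dvd fun f hf => by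
    obtain ⟨s, hs, hf⟩ := mem_biUnion.1 hf
    obtain ⟨hfs, hf0⟩ := mem_filter.1 hf
    rw [mem_range] at hs
    exact h f hf0 ((Finset.Nat.mem_antidiagonalTuple.1 hfs).trans_le (by omega))

theorem q_zero_right (n : ℕ) : q n 0 = 1 :=
  Nat.dvd_one.1 (q_dvd_of_forall_prod_dvd fun f _ _ => by simp)

theorem mul_q_dvd_q_succ {n k d : ℕ} (hd : d ≠ 0) (hdk : d + k ≤ n) :
    d * q (n - d) k ∣ q n (k + 1) := by
  have hcons (f : Fin k → ℕ) (hf : ∀ j, f j ≠ 0) (hsum : ∑ j, f j ≤ n - d) :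
      d * ∏ j, f j ∣ q n (k + 1) := by
    rw [← Fin.prod_cons]
    refine prod_dvd_q (Fin.cases hd hf) ?_
    rw [Fin.sum_cons]
    omega
  refine Nat.mul_dvd_of_dvd_div ?_
    (q_dvd_of_forall_prod_dvd fun f hf hsum => Nat.dvd_div_of_mul_dvd (hcons f hf hsum))
  simpa using hcons (fun _ => 1) (fun _ => one_ne_zero) (by simp; omega)

theorem q_mul_iterated_derivative_intValued_general (n k : ℕ)
    (P : Polynomial ℚ) (hP : IntValued P) (hdeg : P.natDegree ≤ n) :
    IntValued (C ((q n k : ℕ) : ℚ) * derivative^[k] P) := by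
  induction k generalizing n P with
  | zero => simpa [q_zero_right] using hP
  | succ k ih =>
    rw [Function.iterate_succ_apply, derivative_eq_sum_forwardDiff_iter hdeg,
      iterate_derivative_sum, mul_sum]
    refine intValuedSubmodule.sum_mem fun d hd => ?_
    rw [mem_range] at hd
    have hdeg' : (forwardDiff^[d + 1] P).natDegree ≤ n - (d + 1) :=
      (natDegree_forwardDiff_iter_le P _).trans (by omega)
    rw [iterate_derivative_smul]
    by_cases hdk : d + 1 + k ≤ n
    · obtain ⟨t, ht⟩ := mul_q_dvd_q_succ (Nat.succ_ne_zero d) hdk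
      convert intValuedSubmodule.smul_mem ((-1) ^ d * t : ℤ)
        (ih (n - (d + 1)) _ (hP.forwardDiff_iter _) hdeg') using 1
      rw [ht, ← Int.cast_smul_eq_zsmul ℚ, smul_eq_C_mul, smul_eq_C_mul, ← mul_assoc, ← mul_assoc,
        ← C_mul, ← C_mul]
      congr 2
      push_cast
      field_simp
    · rw [iterate_derivative_eq_zero (hdeg'.trans_lt (by omega)), smul_zero, mul_zero]
      exact intValuedSubmodule.zero_mem

theorem q_mul_iterated_derivative_intValued (n k : ℕ) (hkn : k ≤ n)
    (P : Polynomial ℚ) (hP : IntValued P) (hdeg : P.natDegree ≤ n) :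
    IntValued (C ((q n k : ℕ) : ℚ) * derivative^[k] P) :=
  q_mul_iterated_derivative_intValued_general n k P hP hdeg
end
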